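/- arXiv:2510.19119 — 2 statements merged into one kernel-verified Lean document; each statement's English description precedes it below -/
import Mathlib

section
/- Let X₁, …, X_M ∈ ℝ^d, let w ∈ ℝ^M satisfy w_j ≥ 0 for all j and Σ_j w_j = 1, and suppose M(w) = Σ_{j=1}^M w_j X_j X_jᵀ is invertible. Let f = max_{1 ≤ i ≤ M} X_iᵀ M(w)⁻¹ X_i. For λ > 0, n > 0, set V = λ·I + n·M(w). Then for any vectors θ̂, θ* ∈ ℝ^d, √( (1/M) Σ_{i=1}^M ( X_iᵀ (θ̂ − θ*) )² ) ≤ √(f / n) · √( (θ̂ − θ*)ᵀ V (θ̂ − θ*) ). -/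
/-! Since `M(w)` is positive semidefinite and invertible, Cauchy–Schwarz for the form it
defines, applied to `M(w)⁻¹ Xᵢ` and `θ̂ − θ*`, gives
`(Xᵢᵀ(θ̂ − θ*))² ≤ (Xᵢᵀ M(w)⁻¹ Xᵢ) ‖θ̂ − θ*‖²_{M(w)}`.
Averaging over the arms bounds the mean squared error by `f ‖θ̂ − θ*‖²_{M(w)}`, and
`n ‖θ̂ − θ*‖²_{M(w)} ≤ ‖θ̂ − θ*‖²_V` because `λ ≥ 0`. -/

open Matrix

namespace Matrix

variable {n : Type*} [Fintype n] {A : Matrix n n ℝ}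

theorem IsHermitian.dotProduct_mulVec_comm (hA : A.IsHermitian) (x y : n → ℝ) :
    x ⬝ᵥ A *ᵥ y = y ⬝ᵥ A *ᵥ x := by
  rw [dotProduct_mulVec, ← mulVec_transpose, ← conjTranspose_eq_transpose_of_trivial, hA.eq,
    dotProduct_comm]

theorem PosSemidef.dotProduct_mulVec_self_nonneg (hA : A.PosSemidef) (x : n → ℝ) :
    0 ≤ x ⬝ᵥ A *ᵥ x := by
  simpa only [star_trivial] using hA.dotProduct_mulVec_nonneg x

theorem PosSemidef.dotProduct_mulVec_sq_le (hA : A.PosSemidef) (x y : n → ℝ) :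
    (x ⬝ᵥ A *ᵥ y) ^ 2 ≤ (x ⬝ᵥ A *ᵥ x) * (y ⬝ᵥ A *ᵥ y) := by
  classical
  have hsymm : LinearMap.IsSymm (toBilin' A) := ⟨fun u v => by
    simp only [toBilin'_apply', RingHom.id_apply, hA.isHermitian.dotProduct_mulVec_comm u]⟩
  simpa only [toBilin'_apply'] using (toBilin' A).apply_sq_le_of_symm
    (fun z => by simpa only [toBilin'_apply'] using hA.dotProduct_mulVec_self_nonneg z) hsymm x y

theorem PosSemidef.dotProduct_sq_le_of_isUnit [DecidableEq n] (hA : A.PosSemidef)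
    (hA' : IsUnit A) (x y : n → ℝ) :
    (x ⬝ᵥ y) ^ 2 ≤ (x ⬝ᵥ A⁻¹ *ᵥ x) * (y ⬝ᵥ A *ᵥ y) := by
  have hx : A *ᵥ (A⁻¹ *ᵥ x) = x := by
    rw [mulVec_mulVec, mul_nonsing_inv _ ((isUnit_iff_isUnit_det A).mp hA'), one_mulVec]
  have h := hA.dotProduct_mulVec_sq_le (A⁻¹ *ᵥ x) y
  rwa [hA.isHermitian.dotProduct_mulVec_comm _ y, hx, dotProduct_comm (A⁻¹ *ᵥ x),
    dotProduct_comm y x] at h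

theorem posSemidef_sum_smul_vecMulVec_self {ι : Type*} [Fintype ι] (X : ι → n → ℝ)
    {w : ι → ℝ} (hw : ∀ j, 0 ≤ w j) :
    (∑ j, w j • vecMulVec (X j) (X j)).PosSemidef :=
  posSemidef_sum _ fun j _ => by
    simpa only [star_trivial] using (posSemidef_vecMulVec_self_star (X j)).smul (hw j)

theorem mul_dotProduct_mulVec_le_smul_one_add_smul [DecidableEq n] {lam : ℝ} (hlam : 0 ≤ lam)
    (c : ℝ) (v : n → ℝ) :
    c * (v ⬝ᵥ A *ᵥ v) ≤ v ⬝ᵥ (lam • (1 : Matrix n n ℝ) + c • A) *ᵥ v := by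
  have hvv : 0 ≤ v ⬝ᵥ v := dotProduct_self_star_nonneg v
  rw [add_mulVec, smul_mulVec, smul_mulVec, one_mulVec, dotProduct_add, dotProduct_smul,
    dotProduct_smul, smul_eq_mul, smul_eq_mul]
  nlinarith

theorem PosSemidef.mean_sq_dotProduct_le [DecidableEq n] {ι : Type*} [Fintype ι]
    (hA : A.PosSemidef) (hA' : IsUnit A) (X : ι → n → ℝ) (v : n → ℝ) :
    1 / (Fintype.card ι : ℝ) * ∑ i, (X i ⬝ᵥ v) ^ 2 ≤
      (⨆ i, X i ⬝ᵥ A⁻¹ *ᵥ X i) * (v ⬝ᵥ A *ᵥ v) := by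
  have hq := hA.dotProduct_mulVec_self_nonneg v
  have hf : 0 ≤ ⨆ i, X i ⬝ᵥ A⁻¹ *ᵥ X i :=
    Real.iSup_nonneg fun i => hA.inv.dotProduct_mulVec_self_nonneg (X i)
  have hle (i : ι) : X i ⬝ᵥ A⁻¹ *ᵥ X i ≤ ⨆ i, X i ⬝ᵥ A⁻¹ *ᵥ X i :=
    le_ciSup (Set.finite_range fun i => X i ⬝ᵥ A⁻¹ *ᵥ X i).bddAbove i
  rw [one_div_mul_eq_div]
  refine div_le_of_le_mul₀ (Nat.cast_nonneg _) (mul_nonneg hf hq) ?_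
  calc ∑ i, (X i ⬝ᵥ v) ^ 2
      ≤ ∑ _i : ι, (⨆ i, X i ⬝ᵥ A⁻¹ *ᵥ X i) * (v ⬝ᵥ A *ᵥ v) :=
        Finset.sum_le_sum fun i _ => (hA.dotProduct_sq_le_of_isUnit hA' (X i) v).trans <|
          mul_le_mul_of_nonneg_right (hle i) hq
    _ = _ := by rw [Finset.sum_const, Finset.card_univ, nsmul_eq_mul, mul_comm]

end Matrix

theorem stmt_5_general {d M : ℕ} (X : Fin M → Fin d → ℝ)
    (w : Fin M → ℝ) (hw : ∀ j, 0 ≤ w j)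
    (Mw : Matrix (Fin d) (Fin d) ℝ)
    (hMw : Mw = ∑ j : Fin M, w j • vecMulVec (X j) (X j))
    (hMwinv : IsUnit Mw)
    (f : ℝ) (hf : f = ⨆ i : Fin M, X i ⬝ᵥ Mw⁻¹ *ᵥ X i)
    (lam n : ℝ) (hlam : 0 < lam) (hn : 0 < n)
    (V : Matrix (Fin d) (Fin d) ℝ)
    (hV : V = lam • (1 : Matrix (Fin d) (Fin d) ℝ) + n • Mw)
    (θhat θstar : Fin d → ℝ) :
    Real.sqrt ((1 / M) * ∑ i : Fin M, (X i ⬝ᵥ (θhat - θstar)) ^ 2) ≤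
      Real.sqrt (f / n) *
        Real.sqrt ((θhat - θstar) ⬝ᵥ V *ᵥ (θhat - θstar)) := by
  set v := θhat - θstar
  have hA : Mw.PosSemidef := hMw ▸ posSemidef_sum_smul_vecMulVec_self X hw
  have hf0 : 0 ≤ f := hf ▸ Real.iSup_nonneg fun i => hA.inv.dotProduct_mulVec_self_nonneg (X i)
  rw [← Real.sqrt_mul (div_nonneg hf0 hn.le)]
  refine Real.sqrt_le_sqrt ?_
  calc (1 / M) * ∑ i : Fin M, (X i ⬝ᵥ v) ^ 2 ≤ f * (v ⬝ᵥ Mw *ᵥ v) := by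
        simpa only [hf, Fintype.card_fin] using hA.mean_sq_dotProduct_le hMwinv X v
    _ = f / n * (n * (v ⬝ᵥ Mw *ᵥ v)) := by field_simp
    _ ≤ f / n * (v ⬝ᵥ V *ᵥ v) := mul_le_mul_of_nonneg_left
        (hV ▸ mul_dotProduct_mulVec_le_smul_one_add_smul hlam.le n v) (div_nonneg hf0 hn.le)

/-- Deterministic core of the RMSE upper bound (Lemma 1): for a design
`w` in the simplex with invertible design matrix `M(w)`, G-optimal value
`f = max_i X_iᵀ M(w)⁻¹ X_i`, and `V = λ I + n M(w)`, the RMSE of the predicted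
rewards is at most `√(f/n) · ‖θ̂ − θ*‖_V`. -/
theorem stmt_5 {d M : ℕ} (hM : 0 < M) (X : Fin M → Fin d → ℝ)
    (w : Fin M → ℝ) (hw : ∀ j, 0 ≤ w j) (hw1 : ∑ j, w j = 1)
    (Mw : Matrix (Fin d) (Fin d) ℝ)
    (hMw : Mw = ∑ j : Fin M, w j • vecMulVec (X j) (X j))
    (hMwinv : IsUnit Mw)
    (f : ℝ) (hf : f = ⨆ i : Fin M, X i ⬝ᵥ Mw⁻¹ *ᵥ X i)
    (lam n : ℝ) (hlam : 0 < lam) (hn : 0 < n)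
    (V : Matrix (Fin d) (Fin d) ℝ)
    (hV : V = lam • (1 : Matrix (Fin d) (Fin d) ℝ) + n • Mw)
    (θhat θstar : Fin d → ℝ) :
    Real.sqrt ((1 / M) * ∑ i : Fin M, (X i ⬝ᵥ (θhat - θstar)) ^ 2) ≤
      Real.sqrt (f / n) *
        Real.sqrt ((θhat - θstar) ⬝ᵥ V *ᵥ (θhat - θstar)) :=
  stmt_5_general X w hw Mw hMw hMwinv f hf lam n hlam hn V hV θhat θstar
end

section
/- There exists a universal constant c > 0 such that for every integer t ≥ 1 and every measurable estimator p̂ : ({0,1})^t → ℝ, there exists p ∈ [1/4, 3/4] with ∫ |p̂(x) − p| dμ_p^{⊗t}(x) ≥ c · √( p(1 − p) / t ), where μ_p^{⊗t} denotes the t-fold product of the Bernoulli measure with success probability p on {0,1}. -/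
open MeasureTheory

/-- The Bernoulli measure with success probability `p` on `Bool`
(`true` plays the role of `1`, `false` that of `0`). -/
noncomputable def bernoulliMeasure (p : ℝ) : Measure Bool :=
  ENNReal.ofReal p • Measure.dirac true + ENNReal.ofReal (1 - p) • Measure.dirac false

/-!
Le Cam's two-point method. Compare `p = 1/2` with `q = 1/2 + δ`, where `δ = 1/(4√t)`. The χ²
divergence between the `t`-fold products is `(1 + 4δ²)^t - 1 ≤ e^{1/4} - 1 ≤ 1`, so by
Cauchy–Schwarz their `ℓ¹` distance is at most `1` and their overlap `∑ min(P, Q)` is at least `1/2`.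
An estimator within `δ/2` of `p` and of `q` at once cannot exist, so the two risks add up to at
least `δ/2`, and one of them is at least `δ/4 = 1/(16√t) ≥ (1/8)√(p(1-p)/t)`.
-/

open Finset Real

section TwoPoint

variable {α : Type*} [Fintype α]

lemma two_mul_sum_min (P Q : α → ℝ) :
    2 * ∑ x, min (P x) (Q x) = ∑ x, P x + ∑ x, Q x - ∑ x, |P x - Q x| := by
  have hmin (x : α) : 2 * min (P x) (Q x) = P x + Q x - |P x - Q x| := by
    linarith [min_add_max (P x) (Q x), max_sub_min_eq_abs' (P x) (Q x)]
  rw [mul_sum, sum_congr rfl fun x _ => hmin x, sum_sub_distrib, sum_add_distrib]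

lemma abs_sub_mul_sum_min_le {P Q : α → ℝ} (hP : ∀ x, 0 ≤ P x) (hQ : ∀ x, 0 ≤ Q x)
    (f : α → ℝ) (a b : ℝ) :
    |a - b| * ∑ x, min (P x) (Q x) ≤ ∑ x, P x * |f x - a| + ∑ x, Q x * |f x - b| := by
  rw [mul_sum, ← sum_add_distrib]
  refine sum_le_sum fun x _ => ?_
  have htri : |a - b| ≤ |f x - a| + |f x - b| := by
    simpa only [abs_sub_comm a] using abs_sub_le a (f x) b
  have hmin : 0 ≤ min (P x) (Q x) := le_min (hP x) (hQ x)
  calc |a - b| * min (P x) (Q x)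
      ≤ |f x - a| * min (P x) (Q x) + |f x - b| * min (P x) (Q x) := by nlinarith
    _ ≤ P x * |f x - a| + Q x * |f x - b| := by
        nlinarith [min_le_left (P x) (Q x), min_le_right (P x) (Q x), abs_nonneg (f x - a),
          abs_nonneg (f x - b)]

end TwoPoint

def bernoulliWeight (r : ℝ) (b : Bool) : ℝ := if b then r else 1 - r

def bernoulliDensity {ι : Type*} [Fintype ι] (r : ℝ) (x : ι → Bool) : ℝ :=
  ∏ i, bernoulliWeight r (x i)

lemma bernoulliWeight_nonneg {r : ℝ} (h0 : 0 ≤ r) (h1 : r ≤ 1) (b : Bool) :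
    0 ≤ bernoulliWeight r b := by
  cases b <;> simp [bernoulliWeight] <;> linarith

lemma bernoulliMeasure_singleton (r : ℝ) (b : Bool) :
    bernoulliMeasure r {b} = ENNReal.ofReal (bernoulliWeight r b) := by
  cases b <;> simp [bernoulliMeasure, bernoulliWeight]

lemma bernoulliDensity_nonneg {ι : Type*} [Fintype ι] {r : ℝ} (h0 : 0 ≤ r) (h1 : r ≤ 1)
    (x : ι → Bool) :
    0 ≤ bernoulliDensity r x :=
  prod_nonneg fun i _ => bernoulliWeight_nonneg h0 h1 (x i)

instance (r : ℝ) : IsFiniteMeasure (bernoulliMeasure r) :=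
  ⟨by simp [bernoulliMeasure, ENNReal.add_lt_top]⟩

section BernoulliProduct

variable {ι : Type*} [Fintype ι] [DecidableEq ι]

lemma integral_pi_bernoulliMeasure {r : ℝ} (h0 : 0 ≤ r) (h1 : r ≤ 1) (f : (ι → Bool) → ℝ) :
    ∫ x, f x ∂(Measure.pi fun _ : ι => bernoulliMeasure r) = ∑ x, bernoulliDensity r x * f x := by
  rw [integral_fintype .of_finite]
  refine sum_congr rfl fun x _ => ?_
  have hweight (i : ι) (_ : i ∈ univ) := bernoulliWeight_nonneg h0 h1 (x i)
  rw [smul_eq_mul, measureReal_def, ← Set.univ_pi_singleton, Measure.pi_pi]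
  simp only [bernoulliMeasure_singleton]
  rw [← ENNReal.ofReal_prod_of_nonneg hweight, ENNReal.toReal_ofReal (prod_nonneg hweight),
    bernoulliDensity]

lemma sum_prod_bool (f : Bool → ℝ) :
    ∑ x : ι → Bool, ∏ i, f (x i) = (f true + f false) ^ Fintype.card ι := by
  rw [← Fintype.prod_sum (fun _ : ι => f), prod_const, card_univ, Fintype.sum_bool]

lemma sum_bernoulliDensity_mul (r s : ℝ) :
    ∑ x : ι → Bool, bernoulliDensity r x * bernoulliDensity s x
      = (r * s + (1 - r) * (1 - s)) ^ Fintype.card ι := by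
  simp_rw [bernoulliDensity, ← prod_mul_distrib]
  rw [sum_prod_bool fun b => bernoulliWeight r b * bernoulliWeight s b]
  simp [bernoulliWeight]

lemma sum_bernoulliDensity (r : ℝ) : ∑ x : ι → Bool, bernoulliDensity r x = 1 := by
  simp_rw [bernoulliDensity]
  rw [sum_prod_bool]
  simp [bernoulliWeight]

lemma sum_sq_sub_bernoulliDensity_half (δ : ℝ) :
    ∑ x : ι → Bool, (bernoulliDensity (1 / 2) x - bernoulliDensity (1 / 2 + δ) x) ^ 2
      = (1 / 2 + 2 * δ ^ 2) ^ Fintype.card ι - (1 / 2) ^ Fintype.card ι := by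
  have hexpand (x : ι → Bool) :
      (bernoulliDensity (1 / 2) x - bernoulliDensity (1 / 2 + δ) x) ^ 2
        = bernoulliDensity (1 / 2) x * bernoulliDensity (1 / 2) x
          - 2 * (bernoulliDensity (1 / 2) x * bernoulliDensity (1 / 2 + δ) x)
          + bernoulliDensity (1 / 2 + δ) x * bernoulliDensity (1 / 2 + δ) x := by ring
  simp_rw [hexpand, sum_add_distrib, sum_sub_distrib, ← mul_sum, sum_bernoulliDensity_mul]
  ring_nf

lemma sq_sum_abs_sub_bernoulliDensity_half_le (δ : ℝ) :
    (∑ x : ι → Bool, |bernoulliDensity (1 / 2) x - bernoulliDensity (1 / 2 + δ) x|) ^ 2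
      ≤ exp (4 * δ ^ 2 * Fintype.card ι) - 1 := by
  set n := Fintype.card ι
  have hcard : ((univ : Finset (ι → Bool)).card : ℝ) = 2 ^ n := by simp [n]
  calc (∑ x : ι → Bool, |bernoulliDensity (1 / 2) x - bernoulliDensity (1 / 2 + δ) x|) ^ 2
      ≤ 2 ^ n * ((1 / 2 + 2 * δ ^ 2) ^ n - (1 / 2) ^ n) := by
        rw [← hcard, ← sum_sq_sub_bernoulliDensity_half]
        simpa only [sq_abs] using sq_sum_le_card_mul_sum_sq (s := univ)
          (f := fun x => |bernoulliDensity (1 / 2) x - bernoulliDensity (1 / 2 + δ) x|)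
    _ = (1 + 4 * δ ^ 2) ^ n - 1 := by
        rw [mul_sub, ← mul_pow, ← mul_pow]
        ring_nf
    _ ≤ exp (4 * δ ^ 2) ^ n - 1 := by
        gcongr
        linarith [add_one_le_exp (4 * δ ^ 2)]
    _ = exp (4 * δ ^ 2 * n) - 1 := by
        rw [← exp_nat_mul, mul_comm]

lemma le_integral_abs_sub_half_add_integral_abs_sub {δ : ℝ} (hδ0 : 0 ≤ δ) (hδ1 : δ ≤ 1 / 2)
    (hδ : exp (4 * δ ^ 2 * Fintype.card ι) ≤ 2) (f : (ι → Bool) → ℝ) :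
    δ / 2 ≤ ∫ x, |f x - 1 / 2| ∂(Measure.pi fun _ : ι => bernoulliMeasure (1 / 2))
      + ∫ x, |f x - (1 / 2 + δ)| ∂(Measure.pi fun _ : ι => bernoulliMeasure (1 / 2 + δ)) := by
  set P : (ι → Bool) → ℝ := bernoulliDensity (1 / 2)
  set Q : (ι → Bool) → ℝ := bernoulliDensity (1 / 2 + δ)
  have hTV : ∑ x, |P x - Q x| ≤ 1 := by
    have := sq_sum_abs_sub_bernoulliDensity_half_le (ι := ι) δ
    nlinarith [sum_nonneg fun x (_ : x ∈ univ) => abs_nonneg (P x - Q x)]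
  have hoverlap : 1 / 2 ≤ ∑ x, min (P x) (Q x) := by
    linarith [two_mul_sum_min P Q, sum_bernoulliDensity (ι := ι) (1 / 2),
      sum_bernoulliDensity (ι := ι) (1 / 2 + δ)]
  rw [integral_pi_bernoulliMeasure (by norm_num) (by norm_num),
    integral_pi_bernoulliMeasure (by linarith) (by linarith)]
  calc δ / 2 = |1 / 2 - (1 / 2 + δ)| * (1 / 2) := by
        rw [show (1 / 2 : ℝ) - (1 / 2 + δ) = -δ by ring, abs_neg, abs_of_nonneg hδ0]
        ring
    _ ≤ |1 / 2 - (1 / 2 + δ)| * ∑ x, min (P x) (Q x) := by gcongr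
    _ ≤ _ := abs_sub_mul_sum_min_le (bernoulliDensity_nonneg (by norm_num) (by norm_num))
        (bernoulliDensity_nonneg (by linarith) (by linarith)) f _ _

end BernoulliProduct

lemma sqrt_mul_one_sub_div_le (r : ℝ) {t : ℝ} (ht : 0 ≤ t) :
    √(r * (1 - r) / t) ≤ 1 / (2 * √t) := by
  have hvar : √(r * (1 - r)) ≤ 1 / 2 := by
    rw [show (1 / 2 : ℝ) = √(1 / 4) by rw [show (1 / 4 : ℝ) = (1 / 2) ^ 2 by norm_num,
      sqrt_sq (by norm_num)]]
    exact sqrt_le_sqrt (by nlinarith [sq_nonneg (r - 1 / 2)])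
  calc √(r * (1 - r) / t) = √(r * (1 - r)) / √t := sqrt_div' _ ht
    _ ≤ 1 / 2 / √t := by gcongr
    _ = 1 / (2 * √t) := by ring

/-- Minimax lower bound for estimating a Bernoulli mean: there is a universal
constant `c > 0` such that for every sample size `t ≥ 1` and every measurable
estimator `p̂ : {0,1}^t → ℝ` there is some `p ∈ [1/4, 3/4]` with
`E_{μ_p^{⊗t}} |p̂ − p| ≥ c √(p(1−p)/t)`. -/
theorem stmt_11 :
    ∃ c : ℝ, 0 < c ∧ ∀ t : ℕ, 1 ≤ t → ∀ phat : (Fin t → Bool) → ℝ,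
      Measurable phat →
      ∃ p ∈ Set.Icc (1 / 4 : ℝ) (3 / 4),
        c * Real.sqrt (p * (1 - p) / t) ≤
          ∫ x, |phat x - p| ∂(Measure.pi fun _ : Fin t => bernoulliMeasure p) := by
  refine ⟨1 / 8, by norm_num, fun t ht phat _ => ?_⟩
  have hsqrt : 1 ≤ √(t : ℝ) := one_le_sqrt.mpr (by exact_mod_cast ht)
  set δ : ℝ := 1 / (4 * √t)
  have hδ0 : 0 ≤ δ := by positivity
  have hδ1 : δ ≤ 1 / 4 := by
    rw [div_le_div_iff₀ (by positivity) (by norm_num)]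
    linarith
  have hexp : exp (4 * δ ^ 2 * Fintype.card (Fin t)) ≤ 2 := by
    have : 4 * δ ^ 2 * Fintype.card (Fin t) = 1 / 4 := by
      simp only [δ, Fintype.card_fin]
      field_simp
      rw [sq_sqrt (Nat.cast_nonneg t)]
    rw [this]
    linarith [exp_bound_div_one_sub_of_interval (x := 1 / 4) (by norm_num) (by norm_num)]
  have hrisk := le_integral_abs_sub_half_add_integral_abs_sub hδ0 (by linarith) hexp phat
  have hbound (r : ℝ) : 1 / 8 * √(r * (1 - r) / t) ≤ δ / 4 := by
    have := sqrt_mul_one_sub_div_le r t.cast_nonneg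
    calc 1 / 8 * √(r * (1 - r) / t) ≤ 1 / 8 * (1 / (2 * √t)) := by gcongr
      _ = δ / 4 := by ring
  by_cases hhalf :
      δ / 4 ≤ ∫ x, |phat x - 1 / 2| ∂(Measure.pi fun _ : Fin t => bernoulliMeasure (1 / 2))
  · exact ⟨1 / 2, by norm_num, (hbound _).trans hhalf⟩
  · exact ⟨1 / 2 + δ, ⟨by linarith, by linarith⟩, (hbound _).trans (by linarith)⟩
end
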